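/- arXiv:1901.02640 — 4 statements merged into one kernel-verified Lean document; each statement's English description precedes it below -/
import Mathlib

section
/- Let m ≥ 1, z, t ∈ ℂ^m, and set u = h(z), t_ℝ = h(t). Then f((z − t)(z − t)ᴴ) = (1/2)·[(u − t_ℝ)(u − t_ℝ)ᵀ + (P·u − P·t_ℝ)(P·u − P·t_ℝ)ᵀ]. -/
open Matrix

noncomputable section

/-- `h(z) = (Re(z)ᵀ, Im(z)ᵀ)ᵀ ∈ ℝ^{2m}`, with `ℝ^{2m}` indexed by `Fin m ⊕ Fin m`. -/
def hmap {m : ℕ} (z : Fin m → ℂ) : Fin m ⊕ Fin m → ℝ :=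
  Sum.elim (fun i => (z i).re) (fun i => (z i).im)

/-- `f(A) = (1/2)·[[Re(A), −Im(A)], [Im(A), Re(A)]] ∈ ℝ^{2m×2m}`. -/
def fmap {m : ℕ} (A : Matrix (Fin m) (Fin m) ℂ) :
    Matrix (Fin m ⊕ Fin m) (Fin m ⊕ Fin m) ℝ :=
  (1 / 2 : ℝ) • Matrix.fromBlocks (A.map Complex.re) (-(A.map Complex.im))
    (A.map Complex.im) (A.map Complex.re)

/-- `P = [[0, −I_m], [I_m, 0]] ∈ ℝ^{2m×2m}`. -/
def Pmat (m : ℕ) : Matrix (Fin m ⊕ Fin m) (Fin m ⊕ Fin m) ℝ :=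
  Matrix.fromBlocks 0 (-1) 1 0

lemma Pmat_mulVec {m : ℕ} (z : Fin m → ℂ) :
    Pmat m *ᵥ hmap z = Sum.elim (fun i => -(z i).im) (fun i => (z i).re) := by
  ext i
  cases i <;>
    simp [Pmat, hmap, mulVec, dotProduct, Matrix.fromBlocks, Fintype.sum_sum_type,
      Matrix.one_apply, apply_ite, Finset.sum_ite_eq]

/-- with `u = h(z)`, `t_ℝ = h(t)`,
`f((z−t)(z−t)ᴴ) = (1/2)·[(u−t_ℝ)(u−t_ℝ)ᵀ + (P·u−P·t_ℝ)(P·u−P·t_ℝ)ᵀ]`. -/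
theorem stmt1 (m : ℕ) (hm : 1 ≤ m) (z t : Fin m → ℂ) :
    fmap (vecMulVec (z - t) (star (z - t)))
      = (1 / 2 : ℝ) •
        (vecMulVec (hmap z - hmap t) (hmap z - hmap t)
          + vecMulVec (Pmat m *ᵥ hmap z - Pmat m *ᵥ hmap t)
              (Pmat m *ᵥ hmap z - Pmat m *ᵥ hmap t)) := by
  rw [Pmat_mulVec, Pmat_mulVec]
  ext i j
  cases i <;> cases j <;>
    simp [fmap, hmap, vecMulVec, Matrix.fromBlocks, Complex.sub_re, Complex.sub_im,
      Complex.mul_re, Complex.mul_im] <;> ring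

end
end

section
/- Let m, N ≥ 1, let z₁,…,z_N ∈ ℂ^m, t ∈ ℂ^m, let M ∈ ℂ^{m×m} be Hermitian positive definite, and let u₂ : [0,∞) → [0,∞). Set uₙ = h(zₙ), vₙ = P·uₙ, t_ℝ = h(t), M_ℝ = f(M), and define u_{2,ℝ}(s) = u₂(s/2). Then f( (1/N)·∑ₙ u₂(d²(zₙ,t;M))·(zₙ − t)(zₙ − t)ᴴ ) = (1/(2N))·∑ₙ [ u_{2,ℝ}(d²(uₙ,t_ℝ;M_ℝ))·(uₙ − t_ℝ)(uₙ − t_ℝ)ᵀ + u_{2,ℝ}(d²(vₙ,P·t_ℝ;M_ℝ))·(vₙ − P·t_ℝ)(vₙ − P·t_ℝ)ᵀ ], where d²(z,t;M) = (z − t)ᴴM⁻¹(z − t) for complex arguments and d²(x,t;M) = (x − t)ᵀM⁻¹(x − t) for real arguments. In particular, M satisfies the complex sample scatter equation (1/N)∑ₙ u₂(d²(zₙ,t;M))(zₙ − t)(zₙ − t)ᴴ = M if and only if M_ℝ = f(M) satisfies the displayed real equation with right-hand side M_ℝ. -/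
open Matrix

noncomputable section

/-- `d²(z,t;M) = (z−t)ᴴM⁻¹(z−t)` for complex arguments (a real number when `M` is
Hermitian positive definite; we take the real part). -/
def dsqC {m : ℕ} (z t : Fin m → ℂ) (M : Matrix (Fin m) (Fin m) ℂ) : ℝ :=
  (star (z - t) ⬝ᵥ (M⁻¹ *ᵥ (z - t))).re

/-- `d²(x,t;M) = (x−t)ᵀM⁻¹(x−t)` for real arguments. -/
def dsqR {p : Type*} [Fintype p] [DecidableEq p] (x t : p → ℝ) (M : Matrix p p ℝ) : ℝ :=
  (x - t) ⬝ᵥ (M⁻¹ *ᵥ (x - t))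

/-- The complex weighted sample scatter `(1/N)·∑ₙ u₂(d²(zₙ,t;M))·(zₙ−t)(zₙ−t)ᴴ`. -/
def cScatter {m N : ℕ} (z : Fin N → Fin m → ℂ) (t : Fin m → ℂ)
    (M : Matrix (Fin m) (Fin m) ℂ) (u₂ : ℝ → ℝ) : Matrix (Fin m) (Fin m) ℂ :=
  (N : ℂ)⁻¹ • ∑ n, (u₂ (dsqC (z n) t M) : ℂ) • vecMulVec (z n - t) (star (z n - t))

/-- The symmetrized real weighted sample scatter
`(1/(2N))·∑ₙ [u_{2,ℝ}(d²(uₙ,t_ℝ;M_ℝ))·(uₙ−t_ℝ)(uₙ−t_ℝ)ᵀ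
  + u_{2,ℝ}(d²(vₙ,P·t_ℝ;M_ℝ))·(vₙ−P·t_ℝ)(vₙ−P·t_ℝ)ᵀ]`
with `uₙ = h(zₙ)`, `vₙ = P·uₙ`, `t_ℝ = h(t)`, `M_ℝ = f(M)`, `u_{2,ℝ}(s) = u₂(s/2)`. -/
def rScatter {m N : ℕ} (z : Fin N → Fin m → ℂ) (t : Fin m → ℂ)
    (M : Matrix (Fin m) (Fin m) ℂ) (u₂ : ℝ → ℝ) :
    Matrix (Fin m ⊕ Fin m) (Fin m ⊕ Fin m) ℝ :=
  (1 / (2 * N) : ℝ) •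
    ∑ n,
      (u₂ (dsqR (hmap (z n)) (hmap t) (fmap M) / 2) •
          vecMulVec (hmap (z n) - hmap t) (hmap (z n) - hmap t)
        + u₂ (dsqR (Pmat m *ᵥ hmap (z n)) (Pmat m *ᵥ hmap t) (fmap M) / 2) •
          vecMulVec (Pmat m *ᵥ hmap (z n) - Pmat m *ᵥ hmap t)
            (Pmat m *ᵥ hmap (z n) - Pmat m *ᵥ hmap t))

namespace Stmt2Aux

variable {m : ℕ}

/-- Unscaled real representation. -/
def gmap (A : Matrix (Fin m) (Fin m) ℂ) : Matrix (Fin m ⊕ Fin m) (Fin m ⊕ Fin m) ℝ :=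
  Matrix.fromBlocks (A.map Complex.re) (-(A.map Complex.im))
    (A.map Complex.im) (A.map Complex.re)

lemma fmap_eq (A : Matrix (Fin m) (Fin m) ℂ) : fmap A = (1 / 2 : ℝ) • gmap A := rfl

lemma map_re_mul (A B : Matrix (Fin m) (Fin m) ℂ) :
    (A * B).map Complex.re =
      A.map Complex.re * B.map Complex.re - A.map Complex.im * B.map Complex.im := by
  ext i j
  simp only [Matrix.map_apply, Matrix.mul_apply, Matrix.sub_apply]
  rw [Complex.re_sum]
  simp [Complex.mul_re, Finset.sum_sub_distrib]

lemma map_im_mul (A B : Matrix (Fin m) (Fin m) ℂ) :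
    (A * B).map Complex.im =
      A.map Complex.re * B.map Complex.im + A.map Complex.im * B.map Complex.re := by
  ext i j
  simp only [Matrix.map_apply, Matrix.mul_apply, Matrix.add_apply]
  rw [Complex.im_sum]
  simp [Complex.mul_im, Finset.sum_add_distrib]

lemma gmap_mul (A B : Matrix (Fin m) (Fin m) ℂ) : gmap (A * B) = gmap A * gmap B := by
  unfold gmap
  rw [Matrix.fromBlocks_multiply, map_re_mul, map_im_mul, Matrix.fromBlocks_inj]
  refine ⟨?_, ?_, ?_, ?_⟩ <;> (try simp only [neg_mul, mul_neg, sub_eq_add_neg, neg_add_rev]) <;> abel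

lemma gmap_one : gmap (1 : Matrix (Fin m) (Fin m) ℂ) = 1 := by
  unfold gmap
  have h1 : (1 : Matrix (Fin m) (Fin m) ℂ).map Complex.re = 1 :=
    Matrix.map_one _ Complex.zero_re Complex.one_re
  have h2 : (1 : Matrix (Fin m) (Fin m) ℂ).map Complex.im = 0 := by
    ext i j
    by_cases h : i = j <;> simp [Matrix.one_apply, h]
  rw [h1, h2, neg_zero, Matrix.fromBlocks_one]

lemma finv (M : Matrix (Fin m) (Fin m) ℂ) (hdet : IsUnit M.det) :
    (fmap M)⁻¹ = (4 : ℝ) • fmap M⁻¹ := by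
  apply Matrix.inv_eq_right_inv
  have h1 : M * M⁻¹ = 1 := Matrix.mul_nonsing_inv M hdet
  rw [fmap_eq, fmap_eq, Matrix.smul_mul, Matrix.mul_smul, Matrix.mul_smul,
    ← gmap_mul, h1, gmap_one]
  simp only [smul_smul]
  norm_num

lemma gmap_mulVec (B : Matrix (Fin m) (Fin m) ℂ) (w : Fin m → ℂ) :
    gmap B *ᵥ hmap w = hmap (B *ᵥ w) := by
  unfold gmap hmap
  rw [Matrix.fromBlocks_mulVec]
  funext x
  rcases x with i | i
  · simp only [Sum.elim_inl, Sum.elim_inr, Sum.elim_comp_inl, Sum.elim_comp_inr,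
      Pi.add_apply, Matrix.mulVec, dotProduct, Matrix.map_apply, Matrix.neg_apply]
    rw [Complex.re_sum, ← Finset.sum_add_distrib]
    exact Finset.sum_congr rfl fun k _ => by simp [Complex.mul_re]; try ring
  · simp only [Sum.elim_inl, Sum.elim_inr, Sum.elim_comp_inl, Sum.elim_comp_inr,
      Pi.add_apply, Matrix.mulVec, dotProduct, Matrix.map_apply, Matrix.neg_apply]
    rw [Complex.im_sum, ← Finset.sum_add_distrib]
    exact Finset.sum_congr rfl fun k _ => by simp [Complex.mul_im]; try ring

lemma hmap_sub (a b : Fin m → ℂ) : hmap a - hmap b = hmap (a - b) := by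
  funext x
  rcases x with i | i <;> simp [hmap]

lemma hdot (a b : Fin m → ℂ) : hmap a ⬝ᵥ hmap b = (star a ⬝ᵥ b).re := by
  simp only [hmap, dotProduct, Pi.star_apply]
  rw [Fintype.sum_sum_type, Complex.re_sum, ← Finset.sum_add_distrib]
  exact Finset.sum_congr rfl fun k _ => by simp [Complex.mul_re]; try ring

lemma Pmul (x : Fin m → ℂ) : Pmat m *ᵥ hmap x = hmap (Complex.I • x) := by
  unfold Pmat hmap
  rw [Matrix.fromBlocks_mulVec]
  funext s
  rcases s with i | i <;>
    simp [Complex.mul_re, Complex.mul_im, Matrix.neg_mulVec]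

lemma dsq_key (M : Matrix (Fin m) (Fin m) ℂ) (hdet : IsUnit M.det) (w : Fin m → ℂ) :
    hmap w ⬝ᵥ ((fmap M)⁻¹ *ᵥ hmap w) = 2 * (star w ⬝ᵥ (M⁻¹ *ᵥ w)).re := by
  rw [finv M hdet, fmap_eq, smul_smul]
  norm_num
  rw [Matrix.smul_mulVec, gmap_mulVec, dotProduct_smul, hdot]
  simp [mul_comm]

lemma star_I_smul (M : Matrix (Fin m) (Fin m) ℂ) (w : Fin m → ℂ) :
    star (Complex.I • w) ⬝ᵥ (M⁻¹ *ᵥ (Complex.I • w)) = star w ⬝ᵥ (M⁻¹ *ᵥ w) := by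
  rw [star_smul, Matrix.mulVec_smul, smul_dotProduct, dotProduct_smul, smul_smul]
  simp [Complex.conj_I, Complex.I_mul_I]

lemma vmv_key (w : Fin m → ℂ) :
    vecMulVec (hmap w) (hmap w) + vecMulVec (hmap (Complex.I • w)) (hmap (Complex.I • w))
      = (2 : ℝ) • fmap (vecMulVec w (star w)) := by
  ext x y
  rcases x with i | i <;> rcases y with j | j <;>
    simp [hmap, fmap, vecMulVec_apply, Matrix.fromBlocks, Complex.mul_re, Complex.mul_im] <;>
    ring

lemma fmap_smul (r : ℝ) (A : Matrix (Fin m) (Fin m) ℂ) :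
    fmap ((r : ℂ) • A) = r • fmap A := by
  ext x y
  rcases x with i | i <;> rcases y with j | j <;>
    simp [fmap, Matrix.fromBlocks, Complex.mul_re, Complex.mul_im] <;> ring

lemma fmap_sum {N : ℕ} (f : Fin N → Matrix (Fin m) (Fin m) ℂ) :
    fmap (∑ n, f n) = ∑ n, fmap (f n) := by
  ext x y
  rcases x with i | i <;> rcases y with j | j <;>
    simp [fmap, Matrix.fromBlocks, Matrix.sum_apply, Complex.re_sum, Complex.im_sum,
      Finset.mul_sum]

lemma fmap_inj : Function.Injective (fmap (m := m)) := by
  intro A B h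
  ext i j
  have h1 : fmap A (Sum.inl i) (Sum.inl j) = fmap B (Sum.inl i) (Sum.inl j) := by rw [h]
  have h2 : fmap A (Sum.inr i) (Sum.inl j) = fmap B (Sum.inr i) (Sum.inl j) := by rw [h]
  simp [fmap, Matrix.fromBlocks] at h1 h2
  exact Complex.ext (by linarith) (by linarith)

end Stmt2Aux

open Stmt2Aux in
open scoped ComplexOrder in
/-- the image under `f` of the complex weighted sample scatter equals
the symmetrized real weighted sample scatter; in particular `(t, M)` satisfies the
complex sample scatter equation iff `M_ℝ = f(M)` satisfies the real one. -/
theorem stmt2 (m N : ℕ) (hm : 1 ≤ m) (hN : 1 ≤ N)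
    (z : Fin N → Fin m → ℂ) (t : Fin m → ℂ)
    (M : Matrix (Fin m) (Fin m) ℂ) (hM : M.PosDef)
    (u₂ : ℝ → ℝ) :
    fmap (cScatter z t M u₂) = rScatter z t M u₂ ∧
    (cScatter z t M u₂ = M ↔ rScatter z t M u₂ = fmap M) := by
  have hdet : IsUnit M.det := isUnit_iff_ne_zero.2 hM.det_pos.ne'
  have key1 : ∀ n, dsqR (hmap (z n)) (hmap t) (fmap M) / 2 = dsqC (z n) t M := by
    intro n
    rw [dsqR, hmap_sub, dsq_key M hdet, dsqC]
    ring
  have key2 : ∀ n, dsqR (Pmat m *ᵥ hmap (z n)) (Pmat m *ᵥ hmap t) (fmap M) / 2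
      = dsqC (z n) t M := by
    intro n
    rw [dsqR, Pmul, Pmul, hmap_sub, ← smul_sub, dsq_key M hdet, star_I_smul, dsqC]
    ring
  have hterm : ∀ n,
      u₂ (dsqR (hmap (z n)) (hmap t) (fmap M) / 2) •
          vecMulVec (hmap (z n) - hmap t) (hmap (z n) - hmap t)
        + u₂ (dsqR (Pmat m *ᵥ hmap (z n)) (Pmat m *ᵥ hmap t) (fmap M) / 2) •
          vecMulVec (Pmat m *ᵥ hmap (z n) - Pmat m *ᵥ hmap t)
            (Pmat m *ᵥ hmap (z n) - Pmat m *ᵥ hmap t)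
      = (2 : ℝ) • (u₂ (dsqC (z n) t M) • fmap (vecMulVec (z n - t) (star (z n - t)))) := by
    intro n
    rw [key1, key2, hmap_sub, Pmul, Pmul, hmap_sub, ← smul_sub, ← smul_add, vmv_key,
      smul_smul, smul_smul, mul_comm]
  have main : fmap (cScatter z t M u₂) = rScatter z t M u₂ := by
    rw [cScatter, rScatter]
    have hcast : ((N : ℂ))⁻¹ = (((N : ℝ)⁻¹ : ℝ) : ℂ) := by push_cast; rfl
    rw [hcast, fmap_smul, fmap_sum]
    have hf : ∀ n, fmap ((u₂ (dsqC (z n) t M) : ℂ) • vecMulVec (z n - t) (star (z n - t)))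
        = u₂ (dsqC (z n) t M) • fmap (vecMulVec (z n - t) (star (z n - t))) :=
      fun n => fmap_smul _ _
    simp only [hf, hterm]
    rw [← Finset.smul_sum, smul_smul]
    have hN0 : (N : ℝ) ≠ 0 := Nat.cast_ne_zero.2 (Nat.one_le_iff_ne_zero.1 hN)
    congr 1
    field_simp
  refine ⟨main, ?_, ?_⟩
  · intro h
    rw [← main, h]
  · intro h
    exact fmap_inj (main.trans h)

end
end

section
/- Let m, N ≥ 1, let z₁,…,z_N ∈ ℂ^m, let u₁, u₂ : [0,∞) → [0,∞), let B ∈ ℂ^{m×m} be invertible and c ∈ ℂ^m. If the pair (t, M), with t ∈ ℂ^m and M ∈ ℂ^{m×m} Hermitian positive definite, satisfies the complex M-estimating equations for the data (z₁,…,z_N), then the pair (B·t + c, B·M·Bᴴ) satisfies the complex M-estimating equations for the transformed data (B·z₁ + c, …, B·z_N + c). -/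
open Matrix
open scoped ComplexOrder

noncomputable section

/-- The pair `(t, M)`, with `M` Hermitian positive definite, satisfies the complex
M-estimating equations for the data `z₁,…,z_N`:
`(1/N)∑ₙ u₁(d(zₙ,t;M))·(zₙ−t) = 0` and
`(1/N)∑ₙ u₂(d²(zₙ,t;M))·(zₙ−t)(zₙ−t)ᴴ = M`, with `d = √(d²)`. -/
def SolvesCMEq {m N : ℕ} (z : Fin N → Fin m → ℂ) (u₁ u₂ : ℝ → ℝ)
    (t : Fin m → ℂ) (M : Matrix (Fin m) (Fin m) ℂ) : Prop :=
  M.PosDef ∧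
  (N : ℂ)⁻¹ • ∑ n, (u₁ (Real.sqrt (dsqC (z n) t M)) : ℂ) • (z n - t) = 0 ∧
  (N : ℂ)⁻¹ • ∑ n, (u₂ (dsqC (z n) t M) : ℂ) • vecMulVec (z n - t) (star (z n - t)) = M

namespace Matrix

lemma vecMulVec_mulVec_star_mulVec {l m n p R : Type*} [Fintype m] [Fintype p] [CommSemiring R]
    [StarRing R] (A : Matrix l m R) (B : Matrix n p R) (x : m → R) (y : p → R) :
    vecMulVec (A *ᵥ x) (star (B *ᵥ y)) = A * vecMulVec x (star y) * Bᴴ := by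
  rw [mul_vecMulVec, vecMulVec_mul, star_mulVec]

variable {n R : Type*} [Fintype n] [DecidableEq n] [CommRing R] [StarRing R]

lemma conjTranspose_mul_inv_mul_mul_conjTranspose_mul {B : Matrix n n R} (hB : IsUnit B.det)
    (M : Matrix n n R) : Bᴴ * (B * M * Bᴴ)⁻¹ * B = M⁻¹ := by
  have hBH : IsUnit Bᴴ.det := by rw [det_conjTranspose]; exact hB.star
  rw [mul_inv_rev, mul_inv_rev, ← Matrix.mul_assoc, ← Matrix.mul_assoc,
    mul_nonsing_inv _ hBH, Matrix.one_mul, Matrix.mul_assoc, nonsing_inv_mul _ hB, Matrix.mul_one]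

lemma star_mulVec_dotProduct_conj_inv_mulVec {B : Matrix n n R} (hB : IsUnit B.det)
    (M : Matrix n n R) (w : n → R) :
    star (B *ᵥ w) ⬝ᵥ ((B * M * Bᴴ)⁻¹ *ᵥ (B *ᵥ w)) = star w ⬝ᵥ (M⁻¹ *ᵥ w) := by
  rw [← conjTranspose_mul_inv_mul_mul_conjTranspose_mul hB M, star_mulVec, ← dotProduct_mulVec,
    mulVec_mulVec, mulVec_mulVec, Matrix.mul_assoc]

end Matrix

lemma dsqC_affine {m : ℕ} {B : Matrix (Fin m) (Fin m) ℂ} (hB : IsUnit B.det)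
    (M : Matrix (Fin m) (Fin m) ℂ) (z t c : Fin m → ℂ) :
    dsqC (B *ᵥ z + c) (B *ᵥ t + c) (B * M * Bᴴ) = dsqC z t M := by
  rw [dsqC, dsqC, add_sub_add_right_eq_sub, ← mulVec_sub,
    star_mulVec_dotProduct_conj_inv_mulVec hB]

theorem stmt9_general (m N : ℕ)
    (z : Fin N → Fin m → ℂ) (u₁ u₂ : ℝ → ℝ)
    (B : Matrix (Fin m) (Fin m) ℂ) (hB : IsUnit B.det) (c : Fin m → ℂ)
    (t : Fin m → ℂ) (M : Matrix (Fin m) (Fin m) ℂ)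
    (hsol : SolvesCMEq z u₁ u₂ t M) :
    SolvesCMEq (fun n => B *ᵥ z n + c) u₁ u₂ (B *ᵥ t + c) (B * M * Bᴴ) := by
  obtain ⟨hM, hloc, hscatter⟩ := hsol
  have hdiff (n : Fin N) : B *ᵥ z n + c - (B *ᵥ t + c) = B *ᵥ (z n - t) := by
    rw [add_sub_add_right_eq_sub, mulVec_sub]
  have hBinj : Function.Injective B.vecMul :=
    vecMul_injective_iff_isUnit.2 ((isUnit_iff_isUnit_det B).2 hB)
  refine ⟨hM.mul_mul_conjTranspose_same hBinj, ?_, ?_⟩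
  · simp only [dsqC_affine hB, hdiff, ← mulVec_smul, ← mulVec_sum, hloc, mulVec_zero]
  · conv_rhs => rw [← hscatter]
    simp only [dsqC_affine hB, hdiff, vecMulVec_mulVec_star_mulVec, Matrix.mul_smul,
      Matrix.smul_mul, Finset.mul_sum, Finset.sum_mul]

/-- affine equivariance of the complex M-estimating equations: if
`(t, M)` solves them for the data `(zₙ)` and `B` is invertible, then
`(B·t + c, B·M·Bᴴ)` solves them for the data `(B·zₙ + c)`. -/
theorem stmt9 (m N : ℕ) (hm : 1 ≤ m) (hN : 1 ≤ N)
    (z : Fin N → Fin m → ℂ) (u₁ u₂ : ℝ → ℝ)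
    (B : Matrix (Fin m) (Fin m) ℂ) (hB : IsUnit B.det) (c : Fin m → ℂ)
    (t : Fin m → ℂ) (M : Matrix (Fin m) (Fin m) ℂ)
    (hsol : SolvesCMEq z u₁ u₂ t M) :
    SolvesCMEq (fun n => B *ᵥ z n + c) u₁ u₂ (B *ᵥ t + c) (B * M * Bᴴ) :=
  stmt9_general m N z u₁ u₂ B hB c t M hsol

end
end

section
/- Let p ≥ 1, let μ be a probability measure on ℝ^p that is invariant under every linear isometry of ℝ^p and satisfies μ({0}) = 0, and let X be a random vector with law μ. Then the real random variable ‖X‖ and the random direction vector X/‖X‖ (valued in the unit sphere of ℝ^p) are independent. -/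
/-!
The orthogonal group `G` of a Euclidean space `E` is compact, so it carries a finite Haar measure
`ν`, and it acts transitively on every sphere. For an isometry-invariant measure `τ` concentrated
on the unit sphere, computing `(ν × τ) {(g, x) | g x ∈ t}` in both orders gives
`τ t * ν G = ν {g | g u ∈ t} * τ E` for any unit vector `u`: up to a scalar, `τ` is the uniform
measure on the sphere. Applied to the law of `X / ‖X‖` on the event `‖X‖ ∈ s`, which is invariant
because the norm is, this shows that `P(‖X‖ ∈ s, X / ‖X‖ ∈ t)` factors as `P(‖X‖ ∈ s)` times a
quantity depending only on `t`; taking `s = univ` identifies that quantity as `P(X / ‖X‖ ∈ t)`.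
-/

open MeasureTheory ProbabilityTheory

noncomputable section

open Set

instance {A : Type*} [NormedRing A] [StarRing A] [CStarRing A] [ProperSpace A] :
    CompactSpace (unitary A) := by
  refine isCompact_iff_compactSpace.mp <|
    Metric.isCompact_of_isClosed_isBounded isClosed_unitary <|
      (Metric.isBounded_closedBall (x := (0 : A)) (r := ‖(1 : A)‖)).subset fun U hU => ?_
  simpa using (CStarRing.norm_coe_unitary_mul ⟨U, hU⟩ 1).le

theorem MeasureTheory.Measure.map_map_restrict_of_semiconj {α β : Type*} [MeasurableSpace α]
    [MeasurableSpace β] {μ : Measure α} {M : Set α} {f : α → β} {Q : α → α} {R : β → β}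
    (hf : Measurable f) (hQ : Measurable Q) (hR : Measurable R) (hM : MeasurableSet M)
    (hμ : μ.map Q = μ) (hQM : Q ⁻¹' M = M) (hfQR : Function.Semiconj f Q R) :
    ((μ.restrict M).map f).map R = (μ.restrict M).map f := by
  have hQ_restrict : (μ.restrict M).map Q = μ.restrict M := by
    rw [← hQM, ← Measure.restrict_map hQ hM, hμ, hQM]
  rw [Measure.map_map hR hf, ← hfQR.comp_eq, ← Measure.map_map hf hQ, hQ_restrict]

section Direction

variable {E F : Type*} [NormedAddCommGroup E] [NormedSpace ℝ E] [NormedAddCommGroup F]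
  [NormedSpace ℝ F]

def direction (x : E) : E := ‖x‖⁻¹ • x

theorem measurable_direction [MeasurableSpace E] [BorelSpace E] :
    Measurable (direction : E → E) :=
  measurable_norm.inv.smul measurable_id

theorem norm_direction {x : E} (hx : x ≠ 0) : ‖direction x‖ = 1 := by
  rw [direction, norm_smul, norm_inv, norm_norm, inv_mul_cancel₀ (norm_ne_zero_iff.2 hx)]

theorem direction_map (f : E →ₗᵢ[ℝ] F) (x : E) : direction (f x) = f (direction x) := by
  rw [direction, direction, f.norm_map, map_smul]

end Direction

section Unitary

variable {E : Type*} [NormedAddCommGroup E] [InnerProductSpace ℝ E] [CompleteSpace E]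

instance : MeasurableSpace (unitary (E →L[ℝ] E)) := borel _

instance : BorelSpace (unitary (E →L[ℝ] E)) := ⟨rfl⟩

theorem exists_unitary_apply_eq {x y : E} (h : ‖x‖ = ‖y‖) :
    ∃ g : unitary (E →L[ℝ] E), (g : E →L[ℝ] E) x = y :=
  ⟨Unitary.linearIsometryEquiv.symm (ℝ ∙ (x - y))ᗮ.reflection, by
    rw [Unitary.coe_symm_linearIsometryEquiv_apply]
    exact Submodule.reflection_sub h⟩

theorem measure_setOf_apply_mem_eq_of_norm_eq (ν : Measure (unitary (E →L[ℝ] E)))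
    [ν.IsMulRightInvariant] {x y : E} (h : ‖x‖ = ‖y‖) (t : Set E) :
    ν {g | (g : E →L[ℝ] E) x ∈ t} = ν {g | (g : E →L[ℝ] E) y ∈ t} := by
  obtain ⟨r, hr⟩ := exists_unitary_apply_eq h.symm
  have hx : {g : unitary (E →L[ℝ] E) | (g : E →L[ℝ] E) x ∈ t} =
      (· * r) ⁻¹' {g | (g : E →L[ℝ] E) y ∈ t} := by
    ext g
    simp [hr]
  rw [hx, measure_preimage_mul_right]

end Unitary

section Invariant

variable {E : Type*} [NormedAddCommGroup E] [InnerProductSpace ℝ E] [FiniteDimensional ℝ E]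
  [MeasurableSpace E] [BorelSpace E]

theorem lintegral_measure_setOf_apply_mem (ν : Measure (unitary (E →L[ℝ] E))) [SFinite ν]
    (τ : Measure E) [SFinite τ] (hτ : ∀ Q : E ≃ₗᵢ[ℝ] E, τ.map Q = τ) {t : Set E}
    (ht : MeasurableSet t) :
    ∫⁻ x, ν {g | (g : E →L[ℝ] E) x ∈ t} ∂τ = τ t * ν univ := by
  have hS : MeasurableSet {q : unitary (E →L[ℝ] E) × E | (q.1 : E →L[ℝ] E) q.2 ∈ t} := by
    refine (Continuous.measurable ?_) ht
    fun_prop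
  calc ∫⁻ x, ν {g | (g : E →L[ℝ] E) x ∈ t} ∂τ
      = ν.prod τ {q | (q.1 : E →L[ℝ] E) q.2 ∈ t} := (Measure.prod_apply_symm hS).symm
    _ = ∫⁻ _, τ t ∂ν := by
      rw [Measure.prod_apply hS]
      refine lintegral_congr fun g => ?_
      change τ (Unitary.linearIsometryEquiv g ⁻¹' t) = τ t
      rw [← Measure.map_apply (Unitary.linearIsometryEquiv g).continuous.measurable ht, hτ]
    _ = τ t * ν univ := lintegral_const _

theorem measure_mul_measure_univ_eq_of_ae_norm_eq (ν : Measure (unitary (E →L[ℝ] E)))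
    [SFinite ν] [ν.IsMulRightInvariant] (τ : Measure E) [SFinite τ]
    (hτ : ∀ Q : E ≃ₗᵢ[ℝ] E, τ.map Q = τ) {u : E} (hτu : ∀ᵐ x ∂τ, ‖x‖ = ‖u‖) {t : Set E}
    (ht : MeasurableSet t) :
    τ t * ν univ = ν {g | (g : E →L[ℝ] E) u ∈ t} * τ univ := by
  rw [← lintegral_measure_setOf_apply_mem ν τ hτ ht, ← lintegral_const]
  exact lintegral_congr_ae <| hτu.mono fun x hx => measure_setOf_apply_mem_eq_of_norm_eq ν hx t

theorem measure_norm_preimage_inter_direction_preimage_mul (μ : Measure E) [SFinite μ]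
    (hμ : ∀ Q : E ≃ₗᵢ[ℝ] E, μ.map Q = μ) (h0 : μ {0} = 0)
    (ν : Measure (unitary (E →L[ℝ] E))) [SFinite ν] [ν.IsMulRightInvariant] {u : E}
    (hu : ‖u‖ = 1) {s : Set ℝ} (hs : MeasurableSet s) {t : Set E} (ht : MeasurableSet t) :
    μ ((‖·‖) ⁻¹' s ∩ direction ⁻¹' t) * ν univ =
      ν {g | (g : E →L[ℝ] E) u ∈ t} * μ ((‖·‖) ⁻¹' s) := by
  set τ := (μ.restrict ((‖·‖) ⁻¹' s)).map direction
  have hτ (Q : E ≃ₗᵢ[ℝ] E) : τ.map Q = τ :=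
    Measure.map_map_restrict_of_semiconj measurable_direction Q.continuous.measurable
      Q.continuous.measurable (measurable_norm hs) (hμ Q) (by ext; simp)
      (direction_map Q.toLinearIsometry)
  have hτu : ∀ᵐ y ∂τ, ‖y‖ = ‖u‖ := by
    rw [ae_map_iff measurable_direction.aemeasurable
      (measurableSet_eq_fun measurable_norm measurable_const), hu]
    refine ae_restrict_of_ae ((measure_eq_zero_iff_ae_notMem.mp h0).mono fun x hx => ?_)
    exact norm_direction hx
  have := measure_mul_measure_univ_eq_of_ae_norm_eq ν τ hτ hτu ht
  rwa [Measure.map_apply measurable_direction ht, Measure.map_apply measurable_direction .univ,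
    Measure.restrict_apply (measurable_direction ht), preimage_univ, Measure.restrict_apply_univ,
    inter_comm] at this

theorem indepFun_norm_direction (μ : Measure E) [IsProbabilityMeasure μ]
    (hμ : ∀ Q : E ≃ₗᵢ[ℝ] E, μ.map Q = μ) (h0 : μ {0} = 0) : IndepFun (‖·‖) direction μ := by
  have : Nontrivial E := by
    by_contra hE
    rw [not_nontrivial_iff_subsingleton] at hE
    simp [Subsingleton.eq_univ_of_nonempty (singleton_nonempty (0 : E))] at h0
  obtain ⟨u, hu⟩ := exists_norm_eq E zero_le_one
  -- the inverse of a left Haar measure is right invariant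
  set ν := (Measure.haar : Measure (unitary (E →L[ℝ] E))).inv
  have hν : ν univ ≠ 0 := isOpen_univ.measure_ne_zero ν univ_nonempty
  rw [indepFun_iff_measure_inter_preimage_eq_mul]
  intro s t hs ht
  have hst := measure_norm_preimage_inter_direction_preimage_mul μ hμ h0 ν hu hs ht
  have hunivt := measure_norm_preimage_inter_direction_preimage_mul μ hμ h0 ν hu .univ ht
  rw [preimage_univ, univ_inter, measure_univ (μ := μ), mul_one] at hunivt
  refine (ENNReal.mul_left_inj hν (measure_ne_top ν univ)).1 ?_
  rw [hst, ← hunivt]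
  ring

end Invariant

theorem ProbabilityTheory.IndepFun.comp_of_map {Ω α β γ : Type*} [MeasurableSpace Ω]
    [MeasurableSpace α] [MeasurableSpace β] [MeasurableSpace γ] {P : Measure Ω} {X : Ω → α}
    {f : α → β} {g : α → γ} (hX : Measurable X) (hf : Measurable f) (hg : Measurable g)
    (h : IndepFun f g (P.map X)) : IndepFun (f ∘ X) (g ∘ X) P := by
  rw [indepFun_iff_measure_inter_preimage_eq_mul] at h ⊢
  intro s t hs ht
  simpa only [Measure.map_apply hX, (hf hs).inter (hg ht), hf hs, hg ht, preimage_comp,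
    preimage_inter] using h s t hs ht

theorem stmt14_general (p : ℕ)
    (Ω : Type*) [MeasurableSpace Ω] (P : Measure Ω)
    (X : Ω → EuclideanSpace ℝ (Fin p)) (hX : Measurable X)
    (μ : Measure (EuclideanSpace ℝ (Fin p))) [IsProbabilityMeasure μ]
    (hlaw : P.map X = μ)
    (hμ : ∀ Q : EuclideanSpace ℝ (Fin p) ≃ₗᵢ[ℝ] EuclideanSpace ℝ (Fin p),
      μ.map Q = μ)
    (h0 : μ {0} = 0) :
    IndepFun (fun ω => ‖X ω‖) (fun ω => (‖X ω‖)⁻¹ • X ω) P := by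
  have h := indepFun_norm_direction μ hμ h0
  rw [← hlaw] at h
  exact h.comp_of_map hX measurable_norm measurable_direction

/-- if the law `μ` of a random vector `X` in `ℝ^p` is invariant under
every linear isometry and puts no mass at `0`, then `‖X‖` and the direction vector
`X/‖X‖` are independent. -/
theorem stmt14 (p : ℕ) (hp : 1 ≤ p)
    (Ω : Type*) [MeasurableSpace Ω] (P : Measure Ω) [IsProbabilityMeasure P]
    (X : Ω → EuclideanSpace ℝ (Fin p)) (hX : Measurable X)
    (μ : Measure (EuclideanSpace ℝ (Fin p))) [IsProbabilityMeasure μ]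
    (hlaw : P.map X = μ)
    (hμ : ∀ Q : EuclideanSpace ℝ (Fin p) ≃ₗᵢ[ℝ] EuclideanSpace ℝ (Fin p),
      μ.map Q = μ)
    (h0 : μ {0} = 0) :
    IndepFun (fun ω => ‖X ω‖) (fun ω => (‖X ω‖)⁻¹ • X ω) P :=
  stmt14_general p Ω P X hX μ hlaw hμ h0

end
end
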